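/- (Lemma 4.4) Let X be an integer-valued random variable with probability mass function p_X, and let D, d > 0 be such that p_X(x) ≤ D·e^{−d·x²} for all integers x ≥ 0. Let p_N denote the probability mass function of S_N = X₁ + ⋯ + X_N for i.i.d. copies X₁, …, X_N of X. Then for all N ≥ 1 and all integers x ≥ 0, p_N(x) ≤ W^N · e^{−d·x²/N}, where W = D·√π/√d + 1 + 2D. (By symmetry, if instead p_X(x) ≤ D·e^{−d·x²} for all integers x ≤ 0, then p_N(x) ≤ W^N · e^{−d·x²/N} for all integers x ≤ 0.) -/

import Mathlib

open MeasureTheory Real Set Filter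
open scoped ENNReal NNReal

noncomputable section

/-- Extended moment generating function `E[e^{tX}]` for an integer random variable with
probability mass function `p`. -/
def MGFeZ (p : ℤ → ℝ) (t : ℝ) : ℝ≥0∞ :=
  ∑' k : ℤ, ENNReal.ofReal (Real.exp (t * k) * p k)

/-- Cumulant generating function (real-valued, meaningful where `MGFeZ` is finite). -/
def LamZ (p : ℤ → ℝ) (t : ℝ) : ℝ := Real.log (MGFeZ p t).toReal

/-- Extended-real-valued cumulant generating function. -/
def ELamZ (p : ℤ → ℝ) (t : ℝ) : EReal :=
  if MGFeZ p t = ⊤ then ⊤ else ((Real.log (MGFeZ p t).toReal : ℝ) : EReal)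

/-- Legendre transform `Λ*(y) = sup_x (y·x − Λ(x))`, with values in `EReal`. -/
def LegendreEZ (p : ℤ → ℝ) (y : ℝ) : EReal :=
  ⨆ x : ℝ, ((y * x : ℝ) : EReal) - ELamZ p x

/-- `iterConvZ p N` is the `N`-fold convolution of the probability mass function `p`, i.e. the
probability mass function of `S_N = X₁ + ⋯ + X_N` for i.i.d. `Xᵢ` with pmf `p`
(set to `0` for `N = 0`). -/
def iterConvZ (p : ℤ → ℝ) : ℕ → ℤ → ℝ
  | 0 => fun _ => 0
  | 1 => p
  | (n+2) => fun k => ∑' j : ℤ, iterConvZ p (n+1) (k - j) * p j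

end

/-!
Chernoff bound: for `t ≥ 0`, `e^{tx} p_N(x) ≤ M(t)^N` with `M(t) = ∑ₖ e^{tk} p(k)`. For `k ≥ 0`,
completing the square turns `e^{tk} · D e^{-dk²}` into `D e^{t²/4d} e^{-d(k - t/2d)²}`, and a
shifted Gaussian sums over `ℤ` to at most `√(π/d) + 2` (compare each side of the shift with the
Gaussian integral); the terms with `k < 0` contribute at most the total mass `1`. Hence
`M(t) ≤ W e^{t²/4d}`, and `t = 2dx/N` gives `p_N(x) ≤ W^N e^{-dx²/N}`. The case `x ≤ 0` follows
by applying this to `k ↦ p (-k)`.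
-/

lemma sum_range_exp_neg_mul_sq_le {d : ℝ} (hd : 0 < d) (n : ℕ) :
    ∑ i ∈ Finset.range n, exp (-d * (i : ℝ) ^ 2) ≤ 1 + √(π / d) / 2 := by
  have hpos : 0 ≤ √(π / d) := sqrt_nonneg _
  cases n with
  | zero => simp only [Finset.range_zero, Finset.sum_empty]; linarith
  | succ n =>
    have hanti : AntitoneOn (fun u : ℝ => exp (-d * u ^ 2)) (Icc 0 (0 + n)) := by
      intro u hu v _ huv
      simp only [exp_le_exp, neg_mul, neg_le_neg_iff]
      gcongr
      exact hu.1
    have htail : ∫ u in (0 : ℝ)..n, exp (-d * u ^ 2) ≤ √(π / d) / 2 := by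
      rw [← integral_gaussian_Ioi, intervalIntegral.integral_of_le n.cast_nonneg]
      exact setIntegral_mono_set (integrable_exp_neg_mul_sq hd).integrableOn
        (.of_forall fun u => (exp_pos _).le) Ioc_subset_Ioi_self.eventuallyLE
    have hsum := hanti.sum_le_integral
    simp only [zero_add] at hsum
    rw [Finset.sum_range_succ']
    push_cast at hsum ⊢
    rw [zero_pow two_ne_zero, mul_zero, exp_zero]
    linarith

lemma summable_exp_neg_mul_sq_nat {d : ℝ} (hd : 0 < d) :
    Summable fun n : ℕ => exp (-d * (n : ℝ) ^ 2) :=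
  summable_of_sum_range_le (fun _ => (exp_pos _).le) (sum_range_exp_neg_mul_sq_le hd)

lemma tsum_exp_neg_mul_sq_nat_le {d : ℝ} (hd : 0 < d) :
    ∑' n : ℕ, exp (-d * (n : ℝ) ^ 2) ≤ 1 + √(π / d) / 2 :=
  Real.tsum_le_of_sum_range_le (fun _ => (exp_pos _).le) (sum_range_exp_neg_mul_sq_le hd)

lemma summable_int_of_le_shift {f : ℤ → ℝ} {g : ℕ → ℝ} (hf : ∀ k, 0 ≤ f k) (hg : Summable g)
    (m : ℤ) (hup : ∀ j : ℕ, f (m + j) ≤ g j) (hdown : ∀ j : ℕ, f (m + -(j + 1)) ≤ g j) :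
    Summable f :=
  (Equiv.addLeft m).summable_iff.mp <| .of_nat_of_neg_add_one
    (.of_nonneg_of_le (fun _ => hf _) hup hg) (.of_nonneg_of_le (fun _ => hf _) hdown hg)

lemma tsum_int_le_two_mul_of_le_shift {f : ℤ → ℝ} {g : ℕ → ℝ} (hf : ∀ k, 0 ≤ f k)
    (hg : Summable g) (m : ℤ) (hup : ∀ j : ℕ, f (m + j) ≤ g j)
    (hdown : ∀ j : ℕ, f (m + -(j + 1)) ≤ g j) :
    ∑' k, f k ≤ 2 * ∑' j, g j := by
  have hsup : Summable fun j : ℕ => f (m + j) := .of_nonneg_of_le (fun _ => hf _) hup hg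
  have hsdown : Summable fun j : ℕ => f (m + -(j + 1)) :=
    .of_nonneg_of_le (fun _ => hf _) hdown hg
  have hshift : ∑' k, f k = ∑' j : ℤ, f (m + j) := ((Equiv.addLeft m).tsum_eq f).symm
  rw [hshift, tsum_of_nat_of_neg_add_one (f := fun j => f (m + j)) hsup hsdown]
  linarith [hsup.tsum_le_tsum hup hg, hsdown.tsum_le_tsum hdown hg]

lemma exp_neg_mul_sq_le_of_le_abs {d x y : ℝ} (hd : 0 ≤ d) (hx : 0 ≤ x) (hxy : x ≤ |y|) :
    exp (-d * y ^ 2) ≤ exp (-d * x ^ 2) := by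
  rw [exp_le_exp, neg_mul, neg_mul, neg_le_neg_iff, ← sq_abs y]
  gcongr

lemma summable_and_tsum_exp_neg_mul_sq_sub_le {d : ℝ} (hd : 0 < d) (a : ℝ) :
    Summable (fun k : ℤ => exp (-d * ((k : ℝ) - a) ^ 2)) ∧
      ∑' k : ℤ, exp (-d * ((k : ℝ) - a) ^ 2) ≤ √(π / d) + 2 := by
  have hceil := Int.le_ceil a
  have hceil' := Int.ceil_lt_add_one a
  have hup (j : ℕ) : exp (-d * (((⌈a⌉ + j : ℤ) : ℝ) - a) ^ 2) ≤ exp (-d * (j : ℝ) ^ 2) :=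
    exp_neg_mul_sq_le_of_le_abs hd.le j.cast_nonneg (le_abs.2 (.inl (by push_cast; linarith)))
  have hdown (j : ℕ) : exp (-d * (((⌈a⌉ + -(j + 1) : ℤ) : ℝ) - a) ^ 2) ≤ exp (-d * (j : ℝ) ^ 2) :=
    exp_neg_mul_sq_le_of_le_abs hd.le j.cast_nonneg (le_abs.2 (.inr (by push_cast; linarith)))
  have hnonneg (k : ℤ) : 0 ≤ exp (-d * ((k : ℝ) - a) ^ 2) := (exp_pos _).le
  refine ⟨summable_int_of_le_shift hnonneg (summable_exp_neg_mul_sq_nat hd) _ hup hdown, ?_⟩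
  linarith [tsum_int_le_two_mul_of_le_shift hnonneg (summable_exp_neg_mul_sq_nat hd) _ hup hdown,
    tsum_exp_neg_mul_sq_nat_le hd]

lemma exp_mul_mul_exp_neg_mul_sq {d : ℝ} (hd : d ≠ 0) (t x : ℝ) :
    exp (t * x) * exp (-d * x ^ 2) = exp (t ^ 2 / (4 * d)) * exp (-d * (x - t / (2 * d)) ^ 2) := by
  rw [← exp_add, ← exp_add]
  congr 1
  field_simp
  ring

section GaussianTail

variable {p : ℤ → ℝ} {D d : ℝ}

lemma exp_mul_le_of_gaussian_bound (hp : ∀ k, 0 ≤ p k) (hD : 0 ≤ D) (hd : d ≠ 0)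
    (hg : ∀ x : ℤ, 0 ≤ x → p x ≤ D * exp (-d * (x : ℝ) ^ 2)) {t : ℝ} (ht : 0 ≤ t) (k : ℤ) :
    exp (t * k) * p k ≤
      D * exp (t ^ 2 / (4 * d)) * exp (-d * ((k : ℝ) - t / (2 * d)) ^ 2) + p k := by
  rcases le_or_gt 0 k with hk | hk
  · calc exp (t * k) * p k ≤ exp (t * k) * (D * exp (-d * (k : ℝ) ^ 2)) := by gcongr; exact hg k hk
      _ = D * exp (t ^ 2 / (4 * d)) * exp (-d * ((k : ℝ) - t / (2 * d)) ^ 2) := by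
        rw [mul_left_comm, exp_mul_mul_exp_neg_mul_sq hd, mul_assoc]
      _ ≤ _ := le_add_of_nonneg_right (hp k)
  · have hexp : exp (t * k) ≤ 1 :=
      exp_le_one_iff.2 (mul_nonpos_of_nonneg_of_nonpos ht (by exact_mod_cast hk.le))
    calc exp (t * k) * p k ≤ p k := mul_le_of_le_one_left (hp k) hexp
      _ ≤ _ := le_add_of_nonneg_left (by positivity)

lemma summable_and_tsum_exp_mul_le_of_gaussian_bound (hp : ∀ k, 0 ≤ p k) (hpsum : Summable p)
    (hmass : ∑' k, p k ≤ 1) (hD : 0 ≤ D) (hd : 0 < d)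
    (hg : ∀ x : ℤ, 0 ≤ x → p x ≤ D * exp (-d * (x : ℝ) ^ 2)) {t : ℝ} (ht : 0 ≤ t) :
    Summable (fun k : ℤ => exp (t * k) * p k) ∧
      ∑' k : ℤ, exp (t * k) * p k ≤ (D * √π / √d + 1 + 2 * D) * exp (t ^ 2 / (4 * d)) := by
  set E := exp (t ^ 2 / (4 * d))
  obtain ⟨hgauss, hgauss_le⟩ := summable_and_tsum_exp_neg_mul_sq_sub_le hd (t / (2 * d))
  have hbound := exp_mul_le_of_gaussian_bound hp hD hd.ne' hg ht
  have hdom : Summable fun k : ℤ => D * E * exp (-d * ((k : ℝ) - t / (2 * d)) ^ 2) + p k :=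
    (hgauss.mul_left _).add hpsum
  have hsum : Summable fun k : ℤ => exp (t * k) * p k :=
    .of_nonneg_of_le (fun k => mul_nonneg (exp_pos _).le (hp k)) hbound hdom
  refine ⟨hsum, ?_⟩
  have hE : 1 ≤ E := one_le_exp (by positivity)
  have hDE : 0 ≤ D * E := by positivity
  calc ∑' k : ℤ, exp (t * k) * p k
      ≤ ∑' k : ℤ, (D * E * exp (-d * ((k : ℝ) - t / (2 * d)) ^ 2) + p k) :=
        hsum.tsum_le_tsum hbound hdom
    _ ≤ D * E * (√(π / d) + 2) + 1 := by
        rw [(hgauss.mul_left _).tsum_add hpsum, tsum_mul_left]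
        gcongr
    _ ≤ (D * √π / √d + 1 + 2 * D) * E := by
        rw [sqrt_div' π hd.le]
        linarith [show (D * √π / √d + 1 + 2 * D) * E = D * E * (√π / √d + 2) + E by ring]

lemma iterConvZ_nonneg (hp : ∀ k, 0 ≤ p k) : ∀ (N : ℕ) (x : ℤ), 0 ≤ iterConvZ p N x
  | 0, _ => le_rfl
  | 1, x => hp x
  | n + 2, _ => tsum_nonneg fun j => mul_nonneg (iterConvZ_nonneg hp (n + 1) _) (hp j)

lemma exp_mul_iterConvZ_le_pow (hp : ∀ k, 0 ≤ p k) {t : ℝ}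
    (hs : Summable fun k : ℤ => exp (t * k) * p k) :
    ∀ (N : ℕ) (x : ℤ), exp (t * x) * iterConvZ p N x ≤ (∑' k : ℤ, exp (t * k) * p k) ^ N
  | 0, _ => by simp [iterConvZ]
  | 1, x => by
      simpa [iterConvZ] using hs.le_tsum x fun k _ => mul_nonneg (exp_pos _).le (hp k)
  | n + 2, x => by
      set M := ∑' k : ℤ, exp (t * k) * p k
      have hterm (j : ℤ) : exp (t * x) * (iterConvZ p (n + 1) (x - j) * p j) ≤
          M ^ (n + 1) * (exp (t * j) * p j) := by
        have hsplit : exp (t * x) * (iterConvZ p (n + 1) (x - j) * p j) =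
            exp (t * ((x - j : ℤ) : ℝ)) * iterConvZ p (n + 1) (x - j) * (exp (t * j) * p j) := by
          rw [mul_mul_mul_comm, ← exp_add]
          push_cast
          ring_nf
        rw [hsplit]
        gcongr
        · exact mul_nonneg (exp_pos _).le (hp j)
        · exact exp_mul_iterConvZ_le_pow hp hs (n + 1) (x - j)
      have hdom : Summable fun j : ℤ => M ^ (n + 1) * (exp (t * j) * p j) := hs.mul_left _
      calc exp (t * x) * iterConvZ p (n + 2) x
          = ∑' j : ℤ, exp (t * x) * (iterConvZ p (n + 1) (x - j) * p j) := tsum_mul_left.symm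
        _ ≤ ∑' j : ℤ, M ^ (n + 1) * (exp (t * j) * p j) :=
          (hdom.of_nonneg_of_le (fun j => mul_nonneg (exp_pos _).le
            (mul_nonneg (iterConvZ_nonneg hp _ _) (hp j))) hterm).tsum_le_tsum hterm hdom
        _ = M ^ (n + 2) := by rw [tsum_mul_left, ← pow_succ]

lemma iterConvZ_le_of_gaussian_bound (hp : ∀ k, 0 ≤ p k) (hpsum : Summable p)
    (hmass : ∑' k, p k ≤ 1) (hd : 0 < d)
    (hg : ∀ x : ℤ, 0 ≤ x → p x ≤ D * exp (-d * (x : ℝ) ^ 2)) {N : ℕ} (hN : N ≠ 0) {x : ℤ}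
    (hx : 0 ≤ x) :
    iterConvZ p N x ≤ (D * √π / √d + 1 + 2 * D) ^ N * exp (-d * (x : ℝ) ^ 2 / N) := by
  have hD : 0 ≤ D := by simpa using (hp 0).trans (hg 0 le_rfl)
  -- the Chernoff parameter minimising `-t x + N t² / (4 d)`
  set t : ℝ := 2 * d * x / N
  have ht : 0 ≤ t := by positivity
  obtain ⟨hs, hmgf⟩ := summable_and_tsum_exp_mul_le_of_gaussian_bound hp hpsum hmass hD hd hg ht
  have hM : 0 ≤ ∑' k : ℤ, exp (t * k) * p k :=
    tsum_nonneg fun k => mul_nonneg (exp_pos _).le (hp k)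
  have hopt : exp (-(t * x)) * exp (t ^ 2 / (4 * d)) ^ N = exp (-d * (x : ℝ) ^ 2 / N) := by
    have hN' : (N : ℝ) ≠ 0 := by exact_mod_cast hN
    rw [← exp_nat_mul, ← exp_add]
    congr 1
    simp only [t]
    field_simp
    ring
  calc iterConvZ p N x = exp (-(t * x)) * (exp (t * x) * iterConvZ p N x) := by
        rw [← mul_assoc, ← exp_add, neg_add_cancel, exp_zero, one_mul]
    _ ≤ exp (-(t * x)) * (∑' k : ℤ, exp (t * k) * p k) ^ N := by
        gcongr
        exact exp_mul_iterConvZ_le_pow hp hs N x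
    _ ≤ exp (-(t * x)) * ((D * √π / √d + 1 + 2 * D) * exp (t ^ 2 / (4 * d))) ^ N := by
        gcongr
    _ = (D * √π / √d + 1 + 2 * D) ^ N * exp (-d * (x : ℝ) ^ 2 / N) := by
        rw [mul_pow, mul_left_comm, hopt]

end GaussianTail

lemma iterConvZ_comp_neg (p : ℤ → ℝ) :
    ∀ (N : ℕ) (x : ℤ), iterConvZ (fun k => p (-k)) N x = iterConvZ p N (-x)
  | 0, _ => rfl
  | 1, _ => rfl
  | n + 2, x => by
      simp only [iterConvZ]
      rw [← (Equiv.neg ℤ).tsum_eq]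
      congr 1
      ext j
      rw [iterConvZ_comp_neg p (n + 1), Equiv.neg_apply, neg_neg]
      ring_nf

theorem lemma_4_4_general
    (p : ℤ → ℝ) (D d : ℝ)
    (hp_nonneg : ∀ k, 0 ≤ p k)
    (hp_mass : ∑' k : ℤ, p k = 1)
    (hd : 0 < d) :
    ((∀ x : ℤ, 0 ≤ x → p x ≤ D * Real.exp (-d * (x : ℝ) ^ 2)) →
      ∀ N : ℕ, 1 ≤ N → ∀ x : ℤ, 0 ≤ x →
        iterConvZ p N x ≤
          (D * Real.sqrt Real.pi / Real.sqrt d + 1 + 2 * D) ^ N *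
            Real.exp (-d * (x : ℝ) ^ 2 / N)) ∧
    ((∀ x : ℤ, x ≤ 0 → p x ≤ D * Real.exp (-d * (x : ℝ) ^ 2)) →
      ∀ N : ℕ, 1 ≤ N → ∀ x : ℤ, x ≤ 0 →
        iterConvZ p N x ≤
          (D * Real.sqrt Real.pi / Real.sqrt d + 1 + 2 * D) ^ N *
            Real.exp (-d * (x : ℝ) ^ 2 / N)) := by
  have hpsum : Summable p := by
    by_contra h
    simp [tsum_eq_zero_of_not_summable h] at hp_mass
  refine ⟨fun hg N hN x hx =>
    iterConvZ_le_of_gaussian_bound hp_nonneg hpsum hp_mass.le hd hg (by omega) hx, ?_⟩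
  intro hg N hN x hx
  have hreflect := iterConvZ_le_of_gaussian_bound (p := fun k => p (-k)) (fun k => hp_nonneg _)
    ((Equiv.neg ℤ).summable_iff.mpr hpsum) ((Equiv.neg ℤ).tsum_eq p ▸ hp_mass.le) hd
    (fun y hy => by simpa using hg (-y) (by omega)) (by omega : N ≠ 0) (neg_nonneg.2 hx)
  simpa [iterConvZ_comp_neg] using hreflect

/-- **Lemma 4.4.** If the probability mass function `p_X` satisfies a one-sided Gaussian bound
`p_X(x) ≤ D e^{−d x²}` (for all integers `x ≥ 0`, resp. all `x ≤ 0`), then the pmf of the sum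
of `N` i.i.d. copies satisfies `p_N(x) ≤ W^N e^{−d x²/N}` on the same half-line, with
`W = D√π/√d + 1 + 2D`. -/
theorem lemma_4_4
    (p : ℤ → ℝ) (D d : ℝ)
    (hp_nonneg : ∀ k, 0 ≤ p k)
    (hp_mass : ∑' k : ℤ, p k = 1)
    (hD : 0 < D) (hd : 0 < d) :
    ((∀ x : ℤ, 0 ≤ x → p x ≤ D * Real.exp (-d * (x : ℝ) ^ 2)) →
      ∀ N : ℕ, 1 ≤ N → ∀ x : ℤ, 0 ≤ x →
        iterConvZ p N x ≤
          (D * Real.sqrt Real.pi / Real.sqrt d + 1 + 2 * D) ^ N *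
            Real.exp (-d * (x : ℝ) ^ 2 / N)) ∧
    ((∀ x : ℤ, x ≤ 0 → p x ≤ D * Real.exp (-d * (x : ℝ) ^ 2)) →
      ∀ N : ℕ, 1 ≤ N → ∀ x : ℤ, x ≤ 0 →
        iterConvZ p N x ≤
          (D * Real.sqrt Real.pi / Real.sqrt d + 1 + 2 * D) ^ N *
            Real.exp (-d * (x : ℝ) ^ 2 / N)) :=
  lemma_4_4_general p D d hp_nonneg hp_mass hd
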